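/- arXiv:0905.3487 — 4 statements merged into one kernel-verified Lean document; each statement's English description precedes it below -/
import Mathlib

section
/- For every finite simple graph G, the alternating number of independent sets satisfies |I(G;−1)| ≤ 2^{φ(G)}, where φ(G) is the decycling number of G. -/
open Classical in
/-- The independence polynomial of a finite simple graph: the coefficient of `x^k`
is the number of independent sets of cardinality `k`. -/
noncomputable def indepPoly {V : Type*} [Fintype V] (G : SimpleGraph V) : Polynomial ℤ :=
  ∑ s ∈ Finset.univ.filter
      (fun s : Finset V => ∀ v ∈ s, ∀ w ∈ s, v ≠ w → ¬ G.Adj v w),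
    Polynomial.X ^ s.card

open Classical in
/-- The decycling number: minimum size of a vertex set whose removal leaves an acyclic graph. -/
noncomputable def decyclingNumber {V : Type*} [Fintype V] (G : SimpleGraph V) : ℕ :=
  sInf {n : ℕ | ∃ s : Finset V, s.card = n ∧ (G.induce {v | v ∉ s}).IsAcyclic}

attribute [local instance] Classical.propDecidable


namespace EngstromAux

open Finset

variable {V : Type*} [Fintype V]

/-- Independence predicate matching `indepPoly`'s filter. -/
def Indep (G : SimpleGraph V) (s : Finset V) : Prop :=
  ∀ v ∈ s, ∀ w ∈ s, v ≠ w → ¬ G.Adj v w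

lemma Indep.mono {G : SimpleGraph V} {s t : Finset V} (h : Indep G t) (hst : s ⊆ t) :
    Indep G s := fun v hv w hw hvw => h v (hst hv) w (hst hw) hvw

/-- Alternating sum of independent sets inside `T`. -/
noncomputable def indSum (G : SimpleGraph V) (T : Finset V) : ℤ :=
  ∑ s ∈ T.powerset.filter (fun s => Indep G s), (-1 : ℤ) ^ s.card

lemma indSum_empty (G : SimpleGraph V) : indSum G (∅ : Finset V) = 1 := by
  have h : Indep G (∅ : Finset V) := fun v hv => absurd hv (Finset.notMem_empty v)
  simp [indSum, Finset.powerset_empty, Finset.filter_singleton, h]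

lemma indSum_eq (G : SimpleGraph V) {T : Finset V} {v : V} (hv : v ∈ T) :
    indSum G T = indSum G (T.erase v)
      - indSum G (T.filter fun w => w ≠ v ∧ ¬ G.Adj v w) := by
  set A := T.powerset.filter (fun s => Indep G s) with hA
  have hsplit := Finset.sum_filter_add_sum_filter_not A (fun s => v ∉ s)
      (fun s : Finset V => (-1 : ℤ) ^ s.card)
  have h1 : A.filter (fun s => v ∉ s) = (T.erase v).powerset.filter (fun s => Indep G s) := by
    ext s
    simp only [hA, Finset.mem_filter, Finset.mem_powerset, Finset.subset_erase]
    tauto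
  have h2 : ∑ s ∈ A.filter (fun s => ¬ v ∉ s), (-1 : ℤ) ^ s.card
      = ∑ t ∈ (T.filter fun w => w ≠ v ∧ ¬ G.Adj v w).powerset.filter (fun s => Indep G s),
          (-(-1 : ℤ) ^ t.card) := by
    refine Finset.sum_bij' (fun s _ => s.erase v) (fun t _ => insert v t) ?g1 ?g2 ?g3 ?g4 ?g5
    case g1 =>
      intro s hs
      simp only [hA, Finset.mem_filter, Finset.mem_powerset, not_not] at hs
      obtain ⟨⟨hsT, hind⟩, hvs⟩ := hs
      simp only [Finset.mem_filter, Finset.mem_powerset]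
      refine ⟨?_, hind.mono (Finset.erase_subset _ _)⟩
      intro w hw
      rw [Finset.mem_erase] at hw
      refine Finset.mem_filter.2 ⟨hsT hw.2, hw.1, hind v hvs w hw.2 (Ne.symm hw.1)⟩
    case g2 =>
      intro t ht
      simp only [Finset.mem_filter, Finset.mem_powerset] at ht
      obtain ⟨htsub, hind⟩ := ht
      have hvt : v ∉ t := fun h => ((Finset.mem_filter.1 (htsub h)).2).1 rfl
      simp only [hA, Finset.mem_filter, Finset.mem_powerset, not_not]
      refine ⟨⟨?_, ?_⟩, Finset.mem_insert_self v t⟩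
      · intro w hw
        rcases Finset.mem_insert.1 hw with rfl | hw
        · exact hv
        · exact Finset.filter_subset _ _ (htsub hw)
      · intro a ha b hb hab
        have key : ∀ w ∈ t, ¬ G.Adj v w := fun w hw => ((Finset.mem_filter.1 (htsub hw)).2).2
        rcases Finset.mem_insert.1 ha with ca | ca <;> rcases Finset.mem_insert.1 hb with cb | cb
        · exact absurd (ca.trans cb.symm) hab
        · exact fun hadj => key b cb (ca ▸ hadj)
        · exact fun hadj => key a ca (cb ▸ hadj).symm
        · exact hind a ca b cb hab
    case g3 =>
      intro s hs
      simp only [hA, Finset.mem_filter, not_not] at hs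
      exact Finset.insert_erase hs.2
    case g4 =>
      intro t ht
      simp only [Finset.mem_filter, Finset.mem_powerset] at ht
      have hvt : v ∉ t := fun h => ((Finset.mem_filter.1 (ht.1 h)).2).1 rfl
      exact Finset.erase_insert hvt
    case g5 =>
      intro s hs
      simp only [hA, Finset.mem_filter, not_not] at hs
      have : s.card = (s.erase v).card + 1 := (Finset.card_erase_add_one hs.2).symm
      rw [this, pow_succ]
      ring
  rw [indSum, ← hA, ← hsplit, h1, h2, Finset.sum_neg_distrib]
  rw [indSum, indSum]
  ring

lemma indSum_isolated (G : SimpleGraph V) {T : Finset V} {v : V} (hv : v ∈ T)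
    (h : ∀ w ∈ T, ¬ G.Adj v w) : indSum G T = 0 := by
  rw [indSum_eq G hv]
  have : (T.filter fun w => w ≠ v ∧ ¬ G.Adj v w) = T.erase v := by
    ext w
    simp only [Finset.mem_filter, Finset.mem_erase]
    exact ⟨fun ⟨hw, hne, _⟩ => ⟨hne, hw⟩, fun ⟨hne, hw⟩ => ⟨hw, hne, h w hw⟩⟩
  rw [this, sub_self]

lemma indSum_leaf (G : SimpleGraph V) {T : Finset V} {v u : V} (hv : v ∈ T) (hu : u ∈ T)
    (hadj : G.Adj v u) (huniq : ∀ w ∈ T, G.Adj v w → w = u) :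
    indSum G T = - indSum G (T.filter fun w => w ≠ u ∧ ¬ G.Adj u w) := by
  have huv : u ≠ v := fun h => G.irrefl (h ▸ hadj)
  have hu' : u ∈ T.erase v := Finset.mem_erase.2 ⟨huv, hu⟩
  have eq1 : (T.filter fun w => w ≠ v ∧ ¬ G.Adj v w) = (T.erase v).erase u := by
    ext w
    simp only [Finset.mem_filter, Finset.mem_erase]
    constructor
    · rintro ⟨hwT, hne, hnadj⟩
      exact ⟨fun h => hnadj (h ▸ hadj), hne, hwT⟩
    · rintro ⟨hnu, hnv, hwT⟩
      exact ⟨hwT, hnv, fun h => hnu (huniq w hwT h)⟩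
  have eq2 : ((T.erase v).filter fun w => w ≠ u ∧ ¬ G.Adj u w)
      = T.filter fun w => w ≠ u ∧ ¬ G.Adj u w := by
    ext w
    simp only [Finset.mem_filter, Finset.mem_erase]
    constructor
    · rintro ⟨⟨_, hwT⟩, h2⟩; exact ⟨hwT, h2⟩
    · rintro ⟨hwT, hnu, hnadj⟩
      exact ⟨⟨fun h => hnadj (h ▸ hadj.symm), hwT⟩, hnu, hnadj⟩
  rw [indSum_eq G hv, indSum_eq G hu', eq1, eq2, Finset.erase_right_comm]
  ring


open SimpleGraph in
lemma exists_leaf {W : Type*} [Fintype W] [Nonempty W] (H : SimpleGraph W)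
    (hH : H.IsAcyclic) : ∃ v : W, ∀ a b : W, H.Adj v a → H.Adj v b → a = b := by
  by_contra hcon
  push_neg at hcon
  set P : ℕ → Prop := fun n => ∃ (x y : W) (p : H.Walk x y), p.IsPath ∧ p.length = n with hP
  have hP0 : P 0 := ⟨Classical.arbitrary W, Classical.arbitrary W, Walk.nil, by simp, rfl⟩
  have hmax : ∀ (a b : W) (q : H.Walk a b), q.IsPath →
      q.length ≤ Nat.findGreatest P (Fintype.card W) := fun a b q hq =>
    Nat.le_findGreatest (le_of_lt hq.length_lt) ⟨a, b, q, hq, rfl⟩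
  obtain ⟨x, y, p, hp, hlen⟩ : P (Nat.findGreatest P (Fintype.card W)) :=
    Nat.findGreatest_spec (Nat.zero_le _) hP0
  obtain ⟨a, b, hxa, hxb, hab⟩ := hcon x
  cases p with
  | nil =>
      have h1 : (Walk.cons hxa Walk.nil).IsPath := by
        simp [Walk.cons_isPath_iff, hxa.ne]
      have := hmax _ _ _ h1
      simp only [Walk.length_cons, Walk.length_nil] at this hlen
      omega
  | @cons _ c _ hxc q =>
      rw [Walk.cons_isPath_iff] at hp
      obtain ⟨hq, hxq⟩ := hp
      -- choose a neighbor w of x with w ≠ c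
      obtain ⟨w, hxw, hwc⟩ : ∃ w : W, H.Adj x w ∧ w ≠ c := by
        by_cases hac : a = c
        · exact ⟨b, hxb, fun h => hab (hac.symm ▸ h ▸ rfl)⟩
        · exact ⟨a, hxa, hac⟩
      by_cases hws : w ∈ q.support
      · -- build a cycle
        have hr : (q.takeUntil w hws).IsPath := hq.takeUntil hws
        have hxr : x ∉ (q.takeUntil w hws).support :=
          fun h => hxq (q.support_takeUntil_subset hws h)
        have hinner : (Walk.cons hxc (q.takeUntil w hws)).IsPath :=
          (Walk.cons_isPath_iff _ _).2 ⟨hr, hxr⟩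
        have hedge : s(w, x) ∉ (Walk.cons hxc (q.takeUntil w hws)).edges := by
          rw [Walk.edges_cons]
          intro hmem
          rcases List.mem_cons.1 hmem with h1 | h1
          · rw [Sym2.eq_iff] at h1
            rcases h1 with ⟨h2, h3⟩ | ⟨h2, h3⟩
            · exact hxw.ne' h2
            · exact hwc h2
          · exact hxr ((q.takeUntil w hws).snd_mem_support_of_mem_edges h1)
        exact hH _ ((Walk.cons_isCycle_iff _ hxw.symm).2 ⟨hinner, hedge⟩)
      · -- extend the path
        have hext : (Walk.cons hxw.symm (Walk.cons hxc q)).IsPath := by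
          rw [Walk.cons_isPath_iff]
          refine ⟨(Walk.cons_isPath_iff _ _).2 ⟨hq, hxq⟩, ?_⟩
          rw [Walk.support_cons]
          intro h
          rcases List.mem_cons.1 h with h1 | h1
          · exact hxw.ne' h1
          · exact hws h1
        have := hmax _ _ _ hext
        simp only [Walk.length_cons] at this hlen
        omega

lemma acyclic_induce_subset {G : SimpleGraph V} {s t : Set V} (hst : s ⊆ t)
    (h : (G.induce t).IsAcyclic) : (G.induce s).IsAcyclic := by
  intro v c hc
  let f : G.induce s →g G.induce t :=
    ⟨fun x => ⟨x.1, hst x.2⟩, fun hadj => hadj⟩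
  have hinj : Function.Injective f := by
    intro a b hab
    have h2 : ((f a : ↥t) : V) = ((f b : ↥t) : V) := congrArg Subtype.val hab
    exact Subtype.ext h2
  exact h (c.map f) (hc.map hinj)

lemma abs_indSum_le_one (G : SimpleGraph V) :
    ∀ (n : ℕ) (T : Finset V), T.card = n →
      (G.induce (↑T : Set V)).IsAcyclic → |indSum G T| ≤ 1 := by
  intro n
  induction n using Nat.strong_induction_on with
  | _ n ih =>
    intro T hcard hacyc
    rcases T.eq_empty_or_nonempty with rfl | ⟨x, hx⟩
    · rw [indSum_empty]; norm_num
    · haveI : Nonempty (↑(↑T : Set V)) := ⟨⟨x, hx⟩⟩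
      obtain ⟨v, hv⟩ := exists_leaf (G.induce (↑T : Set V)) hacyc
      have hv0 : (v : V) ∈ T := v.2
      by_cases hiso : ∀ w ∈ T, ¬ G.Adj (v : V) w
      · rw [indSum_isolated G hv0 hiso]; norm_num
      · push_neg at hiso
        obtain ⟨u, huT, hadju⟩ := hiso
        have huniq : ∀ w ∈ T, G.Adj (v : V) w → w = u := by
          intro w hwT hadj
          have := hv ⟨w, hwT⟩ ⟨u, huT⟩ hadj hadju
          exact congrArg Subtype.val this
        rw [indSum_leaf G hv0 huT hadju huniq, abs_neg]
        set T' := T.filter (fun w => w ≠ u ∧ ¬ G.Adj u w) with hT'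
        have hsub : T' ⊆ T := Finset.filter_subset _ _
        have hlt : T'.card < n := by
          rw [← hcard]
          apply Finset.card_lt_card
          refine ⟨hsub, fun hTT => ?_⟩
          have := Finset.mem_filter.1 (hTT huT)
          exact this.2.1 rfl
        refine ih _ hlt T' rfl (acyclic_induce_subset ?_ hacyc)
        intro w hw
        exact hsub (by simpa using hw)

lemma fiber_eq (G : SimpleGraph V) {s A : Finset V} (hAs : A ⊆ s)
    (hind : Indep G A) :
    ∑ t ∈ (Finset.univ.powerset.filter (fun t => Indep G t)).filter
        (fun t => t ∩ s = A), (-1 : ℤ) ^ t.card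
      = (-1 : ℤ) ^ A.card
        * indSum G ((sᶜ : Finset V).filter (fun w => ∀ a ∈ A, ¬ G.Adj a w)) := by
  set TA := (sᶜ : Finset V).filter (fun w => ∀ a ∈ A, ¬ G.Adj a w) with hTA
  rw [indSum, Finset.mul_sum]
  refine Finset.sum_bij' (fun t _ => t \ s) (fun r _ => A ∪ r) ?g1 ?g2 ?g3 ?g4 ?g5
  case g1 =>
    intro t ht
    simp only [Finset.mem_filter, Finset.mem_powerset] at ht
    obtain ⟨⟨-, hit⟩, hts⟩ := ht
    simp only [Finset.mem_filter, Finset.mem_powerset]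
    constructor
    · intro w hw
      rw [Finset.mem_sdiff] at hw
      rw [hTA, Finset.mem_filter, Finset.mem_compl]
      refine ⟨hw.2, fun a ha => ?_⟩
      have haT : a ∈ t := (Finset.inter_subset_left : t ∩ s ⊆ t) (hts ▸ ha)
      have haw : a ≠ w := fun h => hw.2 (h ▸ hAs ha)
      exact hit a haT w hw.1 haw
    · exact hit.mono (Finset.sdiff_subset)
  case g2 =>
    intro r hr
    simp only [Finset.mem_filter, Finset.mem_powerset] at hr
    obtain ⟨hrTA, hir⟩ := hr
    have hfact : ∀ w ∈ r, w ∉ s ∧ ∀ a ∈ A, ¬ G.Adj a w := by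
      intro w hw
      have := hrTA hw
      rw [hTA, Finset.mem_filter, Finset.mem_compl] at this
      exact this
    simp only [Finset.mem_filter, Finset.mem_powerset]
    refine ⟨⟨Finset.subset_univ _, ?_⟩, ?_⟩
    · intro a ha b hb hab
      rcases Finset.mem_union.1 ha with ca | ca <;> rcases Finset.mem_union.1 hb with cb | cb
      · exact hind a ca b cb hab
      · exact fun h => (hfact b cb).2 a ca h
      · exact fun h => (hfact a ca).2 b cb h.symm
      · exact hir a ca b cb hab
    · ext w
      simp only [Finset.mem_inter, Finset.mem_union]
      constructor
      · rintro ⟨cw | cw, hws⟩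
        · exact cw
        · exact absurd hws (hfact w cw).1
      · intro hw
        exact ⟨Or.inl hw, hAs hw⟩
  case g3 =>
    intro t ht
    simp only [Finset.mem_filter, Finset.mem_powerset] at ht
    obtain ⟨-, hts⟩ := ht
    ext w
    simp only [Finset.mem_union, Finset.mem_sdiff, ← hts, Finset.mem_inter]
    tauto
  case g4 =>
    intro r hr
    simp only [Finset.mem_filter, Finset.mem_powerset] at hr
    have hrs : ∀ w ∈ r, w ∉ s := by
      intro w hw
      have := hr.1 hw
      rw [hTA, Finset.mem_filter, Finset.mem_compl] at this
      exact this.1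
    ext w
    simp only [Finset.mem_sdiff, Finset.mem_union]
    constructor
    · rintro ⟨cw | cw, hws⟩
      · exact absurd (hAs cw) hws
      · exact cw
    · intro hw
      exact ⟨Or.inr hw, hrs w hw⟩
  case g5 =>
    intro t ht
    simp only [Finset.mem_filter, Finset.mem_powerset] at ht
    have hcard : t.card = A.card + (t \ s).card := by
      rw [← ht.2]
      rw [Finset.card_inter_add_card_sdiff]
    rw [hcard, pow_add]

end EngstromAux

/-- `|I(G;−1)| ≤ 2^{φ(G)}` where `φ(G)` is the decycling number of `G`. -/
theorem abs_indepPoly_neg_one_le_two_pow_decyclingNumber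
    {V : Type*} [Fintype V] (G : SimpleGraph V) :
    |(indepPoly G).eval (-1)| ≤ 2 ^ decyclingNumber G := by
  classical
  obtain ⟨s, hcard, hacyc⟩ :
      ∃ s : Finset V, s.card = decyclingNumber G ∧ (G.induce {v | v ∉ s}).IsAcyclic := by
    have hmem : decyclingNumber G ∈
        {n : ℕ | ∃ s : Finset V, s.card = n ∧ (G.induce {v | v ∉ s}).IsAcyclic} := by
      apply Nat.sInf_mem
      refine ⟨(Finset.univ : Finset V).card, Finset.univ, rfl, ?_⟩
      intro v c _
      exact absurd (Finset.mem_univ (v : V)) v.2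
    obtain ⟨s, h1, h2⟩ := hmem
    exact ⟨s, h1, h2⟩
  have heval : (indepPoly G).eval (-1) = EngstromAux.indSum G Finset.univ := by
    rw [indepPoly, Polynomial.eval_finset_sum]
    simp only [Polynomial.eval_pow, Polynomial.eval_X]
    rw [EngstromAux.indSum, Finset.powerset_univ]
    refine Finset.sum_congr ?_ (fun x _ => rfl)
    ext t
    simp only [Finset.mem_filter, Finset.mem_univ, true_and]
    exact Iff.rfl
  have hsplit : EngstromAux.indSum G Finset.univ
      = ∑ A ∈ s.powerset, ∑ t ∈ (Finset.univ.powerset.filter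
          (fun t => EngstromAux.Indep G t)).filter (fun t => t ∩ s = A),
          (-1 : ℤ) ^ t.card := by
    rw [EngstromAux.indSum]
    exact (Finset.sum_fiberwise_of_maps_to
      (fun t _ => Finset.mem_powerset.2 Finset.inter_subset_right) _).symm
  have hbound : ∀ A ∈ s.powerset,
      |∑ t ∈ (Finset.univ.powerset.filter
          (fun t => EngstromAux.Indep G t)).filter (fun t => t ∩ s = A),
          (-1 : ℤ) ^ t.card| ≤ 1 := by
    intro A hA
    have hAs : A ⊆ s := Finset.mem_powerset.1 hA
    by_cases hind : EngstromAux.Indep G A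
    · rw [EngstromAux.fiber_eq G hAs hind, abs_mul, abs_pow, abs_neg, abs_one, one_pow,
        one_mul]
      refine EngstromAux.abs_indSum_le_one G _ _ rfl
        (EngstromAux.acyclic_induce_subset ?_ hacyc)
      intro w hw
      simp only [Finset.coe_filter, Set.mem_setOf_eq, Finset.mem_compl] at hw
      exact hw.1
    · have hempty : (Finset.univ.powerset.filter
          (fun t => EngstromAux.Indep G t)).filter (fun t => t ∩ s = A) = ∅ := by
        rw [Finset.filter_eq_empty_iff]
        intro t ht hts
        simp only [Finset.mem_filter, Finset.mem_powerset] at ht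
        exact hind (ht.2.mono (hts ▸ Finset.inter_subset_left))
      rw [hempty, Finset.sum_empty]
      norm_num
  calc |(indepPoly G).eval (-1)|
      ≤ ∑ A ∈ s.powerset, (1 : ℤ) := by
        rw [heval, hsplit]
        exact le_trans (Finset.abs_sum_le_sum_abs _ _) (Finset.sum_le_sum hbound)
    _ = (s.powerset.card : ℤ) := by simp
    _ = 2 ^ decyclingNumber G := by
        rw [Finset.card_powerset, hcard]
        push_cast
        ring
end

section
/- If G is a finite simple graph with no cycles (a forest), then |I(G;−1)| ≤ 1, i.e., I(G;−1) ∈ {−1, 0, 1}. -/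
open Finset

open Classical in
/-- signed count of independent subsets of `A` -/
noncomputable def fAux {V : Type*} (G : SimpleGraph V) (A : Finset V) : ℤ :=
  ∑ s ∈ A.powerset.filter
      (fun s : Finset V => ∀ v ∈ s, ∀ w ∈ s, v ≠ w → ¬ G.Adj v w),
    (-1 : ℤ) ^ s.card

open Classical in
lemma fAux_empty {V : Type*} (G : SimpleGraph V) : fAux G ∅ = 1 := by
  unfold fAux
  rw [Finset.powerset_empty]
  rw [Finset.filter_singleton]
  simp

open Classical in
lemma fAux_rec {V : Type*} (G : SimpleGraph V) (A : Finset V) (u : V) (hu : u ∈ A) :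
    fAux G A = fAux G (A.erase u)
      - fAux G ((A.erase u).filter (fun w => ¬ G.Adj u w)) := by
  classical
  set P : Finset V → Prop := fun s => ∀ v ∈ s, ∀ w ∈ s, v ≠ w → ¬ G.Adj v w with hP
  have hsplit := Finset.sum_filter_add_sum_filter_not
    (A.powerset.filter P) (fun s => u ∈ s) (fun s => (-1 : ℤ) ^ s.card)
  have h1 : (A.powerset.filter P).filter (fun s => ¬ u ∈ s)
      = (A.erase u).powerset.filter P := by
    ext s
    simp only [Finset.mem_filter, Finset.mem_powerset, Finset.subset_erase]
    tauto
  have h2 : ∑ s ∈ (A.powerset.filter P).filter (fun s => u ∈ s), (-1 : ℤ) ^ s.card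
      = - fAux G ((A.erase u).filter (fun w => ¬ G.Adj u w)) := by
    unfold fAux
    rw [← Finset.sum_neg_distrib]
    refine Finset.sum_bij' (fun s _ => s.erase u) (fun t _ => insert u t) ?_ ?_ ?_ ?_ ?_
    · intro s hs
      simp only [Finset.mem_filter, Finset.mem_powerset] at hs ⊢
      obtain ⟨⟨hsub, hps⟩, hus⟩ := hs
      constructor
      · intro w hw
        simp only [Finset.mem_erase] at hw
        simp only [Finset.mem_filter, Finset.mem_erase]
        exact ⟨⟨hw.1, hsub hw.2⟩, hps u hus w hw.2 (Ne.symm hw.1)⟩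
      · intro v hv w hw hvw
        exact hps v (Finset.mem_of_mem_erase hv) w (Finset.mem_of_mem_erase hw) hvw
    · intro t ht
      simp only [Finset.mem_filter, Finset.mem_powerset] at ht ⊢
      obtain ⟨hsub, hpt⟩ := ht
      have hut : u ∉ t := fun h => (Finset.mem_erase.mp (Finset.mem_filter.mp (hsub h)).1).1 rfl
      refine ⟨⟨?_, ?_⟩, Finset.mem_insert_self u t⟩
      · intro w hw
        rcases Finset.mem_insert.mp hw with rfl | hw
        · exact hu
        · exact Finset.mem_of_mem_erase (Finset.mem_filter.mp (hsub hw)).1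
      · intro v hv w hw hvw
        rcases Finset.mem_insert.mp hv with hv' | hv'
        · rcases Finset.mem_insert.mp hw with hw' | hw'
          · exact absurd (hv'.trans hw'.symm) hvw
          · subst hv'
            exact (Finset.mem_filter.mp (hsub hw')).2
        · rcases Finset.mem_insert.mp hw with hw' | hw'
          · subst hw'
            intro hadj
            exact (Finset.mem_filter.mp (hsub hv')).2 hadj.symm
          · exact hpt v hv' w hw' hvw
    · intro s hs
      simp only [Finset.mem_filter] at hs
      exact Finset.insert_erase hs.2
    · intro t ht
      simp only [Finset.mem_filter, Finset.mem_powerset] at ht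
      have hut : u ∉ t := fun h => (Finset.mem_erase.mp (Finset.mem_filter.mp (ht.1 h)).1).1 rfl
      exact Finset.erase_insert hut
    · intro s hs
      simp only [Finset.mem_filter] at hs
      have : s.card = (s.erase u).card + 1 := by
        rw [Finset.card_erase_of_mem hs.2]
        have : 1 ≤ s.card := Finset.card_pos.mpr ⟨u, hs.2⟩
        omega
      rw [this, pow_succ]
      ring
  unfold fAux
  rw [← hsplit]
  rw [h1, h2]
  unfold fAux
  ring

open Classical in
lemma fAux_isolated {V : Type*} (G : SimpleGraph V) (A : Finset V) (v : V) (hv : v ∈ A)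
    (hiso : ∀ w ∈ A, ¬ G.Adj v w) : fAux G A = 0 := by
  classical
  rw [fAux_rec G A v hv]
  have : (A.erase v).filter (fun w => ¬ G.Adj v w) = A.erase v := by
    apply Finset.filter_true_of_mem
    intro w hw
    exact hiso w (Finset.mem_of_mem_erase hw)
  rw [this]
  ring

/-- In an acyclic graph, if every vertex of a nonempty finset `A` has a neighbour in `A`,
then some vertex of `A` has exactly one neighbour in `A`. -/
lemma exists_leaf {V : Type*} [Fintype V] (G : SimpleGraph V) (hG : G.IsAcyclic)
    (A : Finset V) (hA : A.Nonempty) (hmin : ∀ v ∈ A, ∃ w ∈ A, G.Adj v w) :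
    ∃ a ∈ A, ∃ u ∈ A, G.Adj a u ∧ ∀ w ∈ A, G.Adj a w → w = u := by
  classical
  -- set of lengths of paths with support in A
  let S : Set ℕ := {n | ∃ a b : V, ∃ p : G.Walk a b, p.IsPath ∧
      (∀ x ∈ p.support, x ∈ A) ∧ p.length = n}
  obtain ⟨v, hv⟩ := hA
  have h0 : 0 ∈ S := ⟨v, v, SimpleGraph.Walk.nil, SimpleGraph.Walk.IsPath.nil,
    by simp [hv], rfl⟩
  have hbdd : ∀ n ∈ S, n < Fintype.card V := by
    rintro n ⟨a, b, p, hp, -, rfl⟩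
    exact hp.length_lt
  let T : Finset ℕ := (Finset.range (Fintype.card V)).filter (· ∈ S)
  have hT : T.Nonempty := ⟨0, by
    simp only [T, Finset.mem_filter, Finset.mem_range]
    exact ⟨Fintype.card_pos_iff.mpr ⟨v⟩, h0⟩⟩
  obtain ⟨a, b, p, hp, hsupp, hlen⟩ : T.max' hT ∈ S := (Finset.mem_filter.mp (T.max'_mem hT)).2
  have hmax : ∀ n ∈ S, n ≤ p.length := by
    intro n hn
    rw [hlen]
    exact T.le_max' n (Finset.mem_filter.mpr ⟨Finset.mem_range.mpr (hbdd n hn), hn⟩)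
  have ha : a ∈ A := hsupp a p.start_mem_support
  -- a's neighbours in A are all in p.support
  have hnbr : ∀ w ∈ A, G.Adj a w → w ∈ p.support := by
    intro w hw hadj
    by_contra hws
    have hcons : (SimpleGraph.Walk.cons hadj.symm p).IsPath := by
      rw [SimpleGraph.Walk.cons_isPath_iff]
      exact ⟨hp, hws⟩
    have : p.length + 1 ∈ S := ⟨w, b, _, hcons, by
      intro x hx
      simp only [SimpleGraph.Walk.support_cons, List.mem_cons] at hx
      rcases hx with rfl | hx
      · exact hw
      · exact hsupp x hx, by simp⟩
    have := hmax _ this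
    omega
  -- via unique paths, any neighbour of `a` in `A` is the second vertex of `p`
  have key : ∀ w ∈ A, G.Adj a w → w = p.getVert 1 := by
    intro w hw hadj
    have hws : w ∈ p.support := hnbr w hw hadj
    have hq : (p.takeUntil w hws).IsPath := hp.takeUntil hws
    have huniq := hG.path_unique ⟨p.takeUntil w hws, hq⟩ (SimpleGraph.Path.singleton hadj)
    have hqe : p.takeUntil w hws = SimpleGraph.Walk.cons hadj SimpleGraph.Walk.nil := by
      simpa [SimpleGraph.Path.singleton] using congrArg Subtype.val huniq
    have hspec := SimpleGraph.Walk.take_spec p hws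
    rw [hqe] at hspec
    rw [← hspec]
    simp [SimpleGraph.Walk.getVert_cons_succ]
  obtain ⟨w0, hw0, hadj0⟩ := hmin a ha
  have hu : p.getVert 1 = w0 := (key w0 hw0 hadj0).symm
  refine ⟨a, ha, w0, hw0, hadj0, ?_⟩
  intro w hw hadj
  rw [key w hw hadj, hu]

open Classical in
lemma fAux_abs_le_one {V : Type*} [Fintype V] (G : SimpleGraph V) (hG : G.IsAcyclic) :
    ∀ (n : ℕ) (A : Finset V), A.card ≤ n → |fAux G A| ≤ 1 := by
  intro n
  induction n with
  | zero =>
    intro A hA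
    have : A = ∅ := Finset.card_eq_zero.mp (Nat.le_zero.mp hA)
    rw [this, fAux_empty]
    norm_num
  | succ n ih =>
    intro A hA
    rcases A.eq_empty_or_nonempty with rfl | hne
    · rw [fAux_empty]; norm_num
    by_cases hiso : ∃ v ∈ A, ∀ w ∈ A, ¬ G.Adj v w
    · obtain ⟨v, hv, hvw⟩ := hiso
      rw [fAux_isolated G A v hv hvw]
      norm_num
    push_neg at hiso
    obtain ⟨a, ha, u, huA, hadj, huniq⟩ := exists_leaf G hG A hne hiso
    rw [fAux_rec G A u huA]
    have hzero : fAux G (A.erase u) = 0 := by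
      apply fAux_isolated G _ a (Finset.mem_erase.mpr ⟨hadj.ne, ha⟩)
      intro w hw hadjw
      have hwA : w ∈ A := Finset.mem_of_mem_erase hw
      exact (Finset.mem_erase.mp hw).1 (huniq w hwA hadjw)
    rw [hzero, zero_sub, abs_neg]
    apply ih
    have h1 : ((A.erase u).filter (fun w => ¬ G.Adj u w)).card ≤ (A.erase u).card :=
      Finset.card_filter_le _ _
    have h2 : (A.erase u).card = A.card - 1 := Finset.card_erase_of_mem huA
    have h3 : 1 ≤ A.card := Finset.card_pos.mpr ⟨u, huA⟩
    omega


/-- If `G` is a forest (acyclic graph), then `|I(G;−1)| ≤ 1`. -/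
theorem abs_indepPoly_neg_one_le_one_of_isAcyclic
    {V : Type*} [Fintype V] (G : SimpleGraph V) (hG : G.IsAcyclic) :
    |(indepPoly G).eval (-1)| ≤ 1 := by
  have h : (indepPoly G).eval (-1) = fAux G Finset.univ := by
    unfold indepPoly fAux
    rw [Finset.powerset_univ, Polynomial.eval_finset_sum]
    simp only [Polynomial.eval_pow, Polynomial.eval_X]
    congr!
  rw [h]
  exact fAux_abs_le_one G hG Finset.univ.card Finset.univ le_rfl
end

section
/- For every finite simple graph G, |I(G;−1)| ≤ 2^{ν(G)}, where ν(G) = |E(G)| − |V(G)| + p is the cyclomatic number of G and p is the number of connected components of G. -/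
/-!
Write `G[A]` for the subgraph induced on a finite vertex set `A`, `ν(A)` for its cyclomatic
number and `I_A` for its independence polynomial, so that `I_A = I_{A - v} + X * I_{A - N[v]}`.
Deleting a vertex `v` removes `deg v` edges and splits the component of `v` into at most `deg v`
components, at most `deg v - 1` of them if two neighbours of `v` stay joined in `G[A - v]`.
Hence `ν` is monotone under deleting vertices, and strictly decreases in the second case.

Induct on `A`, choosing `x` to be an end of a longest path of `G[A]`: all neighbours of `x` lie
on the rest of that path, so they are pairwise joined in `G[A - x]`. If `x` is isolated then
`I_A(-1) = 0`; if `x` is a leaf with neighbour `u` then `I_A(-1) = -I_{A - N[u]}(-1)`; otherwise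
`|I_A(-1)| ≤ |I_{A - x}(-1)| + |I_{A - N[x]}(-1)| ≤ 2 * 2 ^ (ν(A) - 1)`.
-/

open Finset Polynomial
open scoped Classical

theorem Nat.card_add_one_le_of_injOn_of_fiber_subset_range {α β γ : Type*} [Finite α] [Finite β]
    [Finite γ] (f : α → β) (b : β) (g : γ → α) (hinj : Set.InjOn f {a | f a ≠ b})
    (hfib : ∀ a, f a = b → a ∈ Set.range g) :
    Nat.card α + 1 ≤ Nat.card β + Nat.card γ := by
  have := Fintype.ofFinite α
  have := Fintype.ofFinite β
  have := Fintype.ofFinite γ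
  simp only [Nat.card_eq_fintype_card]
  have hfiber : #{a | f a = b} ≤ Fintype.card γ := calc
    _ ≤ #(univ.image g) := Finset.card_le_card fun a ha => by
      obtain ⟨c, rfl⟩ := hfib a (mem_filter.1 ha).2
      exact mem_image_of_mem g (mem_univ c)
    _ ≤ Fintype.card γ := Finset.card_image_le
  have hrest : #{a | ¬f a = b} ≤ #(univ.erase b) :=
    Finset.card_le_card_of_injOn f (fun a ha => by simpa using ha) (hinj.mono (by simp))
  have hsplit := Finset.card_filter_add_card_filter_not (s := univ) (fun a => f a = b)
  rw [Finset.card_erase_of_mem (mem_univ b), Finset.card_univ] at hrest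
  have : 0 < Fintype.card β := Fintype.card_pos_iff.2 ⟨b⟩
  simp only [Finset.card_univ] at hsplit
  omega

namespace SimpleGraph

variable {V : Type*} (G : SimpleGraph V)

def JoinedIn (s : Set V) (x y : V) : Prop := ∃ p : G.Walk x y, ∀ z ∈ p.support, z ∈ s

variable {G} {s : Set V} {x y z v : V}

lemma JoinedIn.symm (h : G.JoinedIn s x y) : G.JoinedIn s y x := by
  obtain ⟨p, hp⟩ := h
  exact ⟨p.reverse, fun z hz => hp z (by simpa using hz)⟩

lemma JoinedIn.trans (h₁ : G.JoinedIn s x y) (h₂ : G.JoinedIn s y z) : G.JoinedIn s x z := by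
  obtain ⟨p, hp⟩ := h₁
  obtain ⟨q, hq⟩ := h₂
  refine ⟨p.append q, fun w hw => ?_⟩
  rw [Walk.mem_support_append_iff] at hw
  exact hw.elim (hp w) (hq w)

lemma joinedIn_iff_reachable_induce (hx : x ∈ s) (hy : y ∈ s) :
    G.JoinedIn s x y ↔ (G.induce s).Reachable ⟨x, hx⟩ ⟨y, hy⟩ := by
  constructor
  · rintro ⟨p, hp⟩
    exact ⟨p.induce s hp⟩
  · rintro ⟨p⟩
    suffices ∀ {a b : s} (p : (G.induce s).Walk a b), G.JoinedIn s a b from this p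
    intro a b p
    induction p with
    | nil => exact ⟨.nil, by simp⟩
    | cons hadj _ ih =>
      obtain ⟨q, hq⟩ := ih
      refine ⟨.cons (induce_adj.1 hadj) q, fun z hz => ?_⟩
      rw [Walk.support_cons, List.mem_cons] at hz
      rcases hz with rfl | hz
      exacts [Subtype.prop _, hq z hz]

lemma JoinedIn.sdiff_singleton (h : G.JoinedIn s x y) (hv : ¬G.JoinedIn s x v) :
    G.JoinedIn (s \ {v}) x y := by
  obtain ⟨p, hp⟩ := h
  refine ⟨p, fun z hz => ⟨hp z hz, ?_⟩⟩
  rintro rfl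
  exact hv ⟨p.takeUntil z hz, fun w hw => hp w (p.support_takeUntil_subset_support hz hw)⟩

lemma JoinedIn.exists_adj_joinedIn_sdiff (h : G.JoinedIn s x v) (hxv : x ≠ v) :
    ∃ u ∈ s, G.Adj v u ∧ G.JoinedIn (s \ {v}) x u := by
  obtain ⟨p, hp⟩ := h
  induction p with
  | nil => exact absurd rfl hxv
  | @cons x x' v hadj q ih =>
    have hx : x ∈ s := hp x (by simp)
    by_cases hx' : x' = v
    · subst hx'
      exact ⟨x, hx, hadj.symm, .nil, by simp [hx, hxv]⟩
    · obtain ⟨u, hu, hvu, q', hq'⟩ := ih hx' (fun z hz => hp z (by simp [hz]))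
      refine ⟨u, hu, hvu, q'.cons hadj, fun z hz => ?_⟩
      rw [Walk.support_cons, List.mem_cons] at hz
      rcases hz with rfl | hz
      exacts [⟨hx, hxv⟩, hq' z hz]

lemma exists_mem_neighbors_joinedIn_erase {A : Finset V} (hx : x ∈ A.erase v)
    (h : G.JoinedIn A x v) : ∃ u ∈ {u ∈ A | G.Adj v u}, G.JoinedIn ↑(A.erase v) x u := by
  obtain ⟨u, hu, hvu, hxu⟩ := h.exists_adj_joinedIn_sdiff (ne_of_mem_erase hx)
  exact ⟨u, mem_filter.2 ⟨hu, hvu⟩, by rwa [coe_erase]⟩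

lemma JoinedIn.of_mem_support {a b : V} (p : G.Walk a b) (hp : ∀ z ∈ p.support, z ∈ s)
    (hz : z ∈ p.support) : G.JoinedIn s a z :=
  ⟨p.takeUntil z hz, fun w hw => hp w (p.support_takeUntil_subset_support hz hw)⟩

lemma JoinedIn.map {W : Type*} {H : SimpleGraph W} (f : G →g H) (h : G.JoinedIn s x y) :
    H.JoinedIn (f '' s) (f x) (f y) := by
  obtain ⟨p, hp⟩ := h
  refine ⟨p.map f, fun z hz => ?_⟩
  rw [Walk.support_map, List.mem_map] at hz
  obtain ⟨a, ha, rfl⟩ := hz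
  exact Set.mem_image_of_mem f (hp a ha)

lemma exists_forall_adj_joinedIn_compl_singleton [Nonempty V] [Finite G.edgeSet] :
    ∃ x, ∀ u w, G.Adj x u → G.Adj x w → G.JoinedIn {x}ᶜ u w := by
  obtain ⟨x, y, p, hp, hmax⟩ := Walk.exists_isPath_forall_isPath_length_le_length G
  have hnbr : ∀ u, G.Adj x u → u ∈ p.support := fun u hxu => by
    by_contra hu
    have := hmax _ _ (p.cons hxu.symm) (hp.cons hu)
    simp at this
  refine ⟨x, fun u w hxu hxw => ?_⟩
  cases p with
  | nil => simpa [hxu.ne'] using hnbr u hxu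
  | cons h q =>
    rw [Walk.cons_isPath_iff] at hp
    have hq : ∀ z ∈ q.support, z ∈ ({x}ᶜ : Set V) := fun z hz hzx => hp.2 (hzx ▸ hz)
    have mem : ∀ z, G.Adj x z → z ∈ q.support := fun z hxz => by
      simpa [hxz.ne'] using hnbr z hxz
    exact (JoinedIn.of_mem_support q hq (mem u hxu)).symm.trans
      (JoinedIn.of_mem_support q hq (mem w hxw))

lemma exists_forall_adj_joinedIn_erase {A : Finset V} (hA : A.Nonempty) :
    ∃ x ∈ A, ∀ u ∈ A, ∀ w ∈ A, G.Adj x u → G.Adj x w → G.JoinedIn ↑(A.erase x) u w := by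
  have : Nonempty (A : Set V) := hA.to_subtype
  obtain ⟨x, hx⟩ := (G.induce (A : Set V)).exists_forall_adj_joinedIn_compl_singleton
  refine ⟨x, x.2, fun u hu w hw hxu hxw => ?_⟩
  obtain ⟨p, hp⟩ := (hx ⟨u, hu⟩ ⟨w, hw⟩ hxu hxw).map (Embedding.induce (A : Set V)).toHom
  refine ⟨p, fun z hz => ?_⟩
  obtain ⟨z, hzx, rfl⟩ := hp z hz
  exact mem_erase.2 ⟨fun h => hzx (Subtype.ext h), z.2⟩

variable (G) in
noncomputable def numComponentsIn (A : Finset V) : ℕ :=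
  Nat.card (G.induce (A : Set V)).ConnectedComponent

lemma numComponentsIn_erase_add_one_le {A N : Finset V} (hv : v ∈ A) (hN : N ⊆ A.erase v)
    (hexit : ∀ x ∈ A.erase v, G.JoinedIn A x v → ∃ u ∈ N, G.JoinedIn (A.erase v) x u) :
    G.numComponentsIn (A.erase v) + 1 ≤ G.numComponentsIn A + #N := by
  have hsub : (A.erase v : Set V) ⊆ A := coe_subset.2 (erase_subset v A)
  let Φ := ConnectedComponent.map (G.induceHomOfLE hsub).toHom
  have hΦ : ∀ x, Φ (connectedComponentMk _ x) = connectedComponentMk _ ⟨x, hsub x.2⟩ :=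
    fun _ => rfl
  rw [numComponentsIn, numComponentsIn, ← Nat.card_eq_finsetCard]
  refine Nat.card_add_one_le_of_injOn_of_fiber_subset_range Φ
    (connectedComponentMk _ ⟨v, hv⟩) (fun u : N => connectedComponentMk _ ⟨u, hN u.2⟩) ?_ ?_
  · rintro C₁ hC₁ C₂ - hC
    induction C₁ using ConnectedComponent.ind with | h x =>
    induction C₂ using ConnectedComponent.ind with | h y =>
    simp only [Set.mem_ofPred_eq, hΦ, ne_eq, ConnectedComponent.eq] at hC₁ hC ⊢
    rw [← joinedIn_iff_reachable_induce] at hC₁ hC ⊢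
    simpa [coe_erase] using hC.sdiff_singleton hC₁
  · intro C hC
    induction C using ConnectedComponent.ind with | h x =>
    rw [hΦ, ConnectedComponent.eq, ← joinedIn_iff_reachable_induce] at hC
    obtain ⟨u, hu, hxu⟩ := hexit x x.2 hC
    exact ⟨⟨u, hu⟩, ConnectedComponent.eq.2 ((joinedIn_iff_reachable_induce _ _).1 hxu.symm)⟩

lemma isIndepSet_insert_of_notMem {s : Set V} (hv : v ∉ s) :
    G.IsIndepSet (insert v s) ↔ G.IsIndepSet s ∧ ∀ w ∈ s, ¬G.Adj v w := by
  simp [isIndepSet_iff, Set.pairwise_insert_of_notMem hv, adj_comm]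

variable (G) in
noncomputable def indepPolyOn (A : Finset V) : ℤ[X] :=
  ∑ t ∈ A.powerset.filter fun t : Finset V => G.IsIndepSet ↑t, X ^ #t

@[simp]
lemma indepPolyOn_empty : G.indepPolyOn ∅ = 1 := by
  simp [indepPolyOn, filter_singleton, IsIndepSet]

lemma indepPolyOn_eq_add {A : Finset V} (hv : v ∈ A) :
    G.indepPolyOn A =
      G.indepPolyOn (A.erase v) + X * G.indepPolyOn {w ∈ A.erase v | ¬G.Adj v w} := by
  have hvB : v ∉ A.erase v := notMem_erase v A
  conv_lhs => rw [← insert_erase hv]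
  simp only [indepPolyOn, sum_filter, mul_sum]
  rw [sum_powerset_insert hvB]
  congr 1
  symm
  rw [← sum_subset (powerset_mono.2 (filter_subset (¬G.Adj v ·) (A.erase v)))]
  · refine sum_congr rfl fun t ht => ?_
    rw [mem_powerset] at ht
    have hvt : v ∉ t := fun h => hvB (filter_subset _ _ (ht h))
    have hnadj : ∀ w ∈ t, ¬G.Adj v w := fun w hw => (mem_filter.1 (ht hw)).2
    have hvt' : v ∉ (t : Set V) := mod_cast hvt
    simp only [coe_insert, isIndepSet_insert_of_notMem hvt', card_insert_of_notMem hvt]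
    simp [and_iff_left hnadj, pow_succ, mul_comm]
  · intro t ht htB
    rw [mem_powerset] at ht htB
    obtain ⟨w, hwt, hwB⟩ := not_subset.1 htB
    have hvw : G.Adj v w := by simpa [ht hwt] using hwB
    refine if_neg ?_
    rw [coe_insert, isIndepSet_insert_of_notMem fun h => hvB (ht h)]
    exact fun h => h.2 w hwt hvw

lemma eval_indepPolyOn_neg_one_of_forall_not_adj {A : Finset V} (hv : v ∈ A)
    (h : ∀ w ∈ A, ¬G.Adj v w) : (G.indepPolyOn A).eval (-1) = 0 := by
  have hB : {w ∈ A.erase v | ¬G.Adj v w} = A.erase v :=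
    filter_true_of_mem fun w hw => h w (mem_of_mem_erase hw)
  simp [indepPolyOn_eq_add hv, hB]

lemma eval_indepPolyOn_neg_one_of_forall_adj_eq {A : Finset V} {u : V} (hv : v ∈ A) (hu : u ∈ A)
    (hvu : G.Adj v u) (h : ∀ w ∈ A, G.Adj v w → w = u) :
    (G.indepPolyOn A).eval (-1) = -(G.indepPolyOn {w ∈ A.erase u | ¬G.Adj u w}).eval (-1) := by
  have hleaf : (G.indepPolyOn (A.erase u)).eval (-1) = 0 :=
    eval_indepPolyOn_neg_one_of_forall_not_adj (mem_erase.2 ⟨hvu.ne, hv⟩)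
      fun w hw hvw => (mem_erase.1 hw).1 (h w (mem_of_mem_erase hw) hvw)
  simp [indepPolyOn_eq_add hu, hleaf]

variable (G) in
noncomputable def numEdgesIn (A : Finset V) : ℕ := #(G.induce (A : Set V)).edgeFinset

variable [Fintype V]

lemma numEdgesIn_erase_add_card_neighbors {A : Finset V} (hv : v ∈ A) :
    G.numEdgesIn (A.erase v) + #{u ∈ A | G.Adj v u} = G.numEdgesIn A := by
  simp only [numEdgesIn, ← card_filter_edgeFinset_toFinset_subset]
  rw [← card_filter_add_card_filter_not (s := {e ∈ G.edgeFinset | e.toFinset ⊆ A}) (v ∉ ·),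
    filter_filter, filter_filter]
  congr 1
  · congr 1
    ext e
    simp [subset_erase]
  · refine card_bij (fun u _ => s(v, u)) (fun u hu => ?_) (fun u _ w _ h => ?_) (fun e he => ?_)
    · simp only [mem_filter] at hu ⊢
      refine ⟨mem_edgeFinset.2 hu.2, fun w hw => ?_, by simp⟩
      rcases Sym2.mem_iff.1 (Sym2.mem_toFinset.1 hw) with rfl | rfl
      exacts [hv, hu.1]
    · exact Sym2.congr_right.1 h
    · simp only [mem_filter, mem_edgeFinset, not_not] at he
      obtain ⟨heE, heA, hve⟩ := he
      have hadj : s(v, Sym2.Mem.other hve) ∈ G.edgeSet := (Sym2.other_spec hve).symm ▸ heE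
      refine ⟨Sym2.Mem.other hve, mem_filter.2 ⟨heA ?_, hadj⟩, Sym2.other_spec hve⟩
      exact Sym2.mem_toFinset.2 (Sym2.other_mem hve)

lemma numEdgesIn_add_numComponentsIn_erase_add_one_le {A : Finset V} (hv : v ∈ A) :
    G.numEdgesIn (A.erase v) + G.numComponentsIn (A.erase v) + 1 ≤
      G.numEdgesIn A + G.numComponentsIn A := by
  have hN : {u ∈ A | G.Adj v u} ⊆ A.erase v := fun u hu =>
    mem_erase.2 ⟨(mem_filter.1 hu).2.ne', (mem_filter.1 hu).1⟩
  have hedges := numEdgesIn_erase_add_card_neighbors (G := G) hv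
  have hcomps := numComponentsIn_erase_add_one_le hv hN fun x hx =>
    exists_mem_neighbors_joinedIn_erase hx
  omega

lemma numEdgesIn_add_numComponentsIn_erase_add_two_le {A : Finset V} {u w : V} (hv : v ∈ A)
    (hu : u ∈ A) (hw : w ∈ A) (hvu : G.Adj v u) (hvw : G.Adj v w) (huw : u ≠ w)
    (hj : G.JoinedIn ↑(A.erase v) u w) :
    G.numEdgesIn (A.erase v) + G.numComponentsIn (A.erase v) + 2 ≤
      G.numEdgesIn A + G.numComponentsIn A := by
  have hwN : w ∈ {u ∈ A | G.Adj v u} := mem_filter.2 ⟨hw, hvw⟩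
  have hN : {u ∈ A | G.Adj v u}.erase w ⊆ A.erase v := fun u hu =>
    have hu := mem_filter.1 (mem_of_mem_erase hu)
    mem_erase.2 ⟨hu.2.ne', hu.1⟩
  have hedges := numEdgesIn_erase_add_card_neighbors (G := G) hv
  have hcard := card_erase_add_one hwN
  have hcomps := numComponentsIn_erase_add_one_le hv hN fun x hx hxv => by
    obtain ⟨u', hu', hxu'⟩ := exists_mem_neighbors_joinedIn_erase hx hxv
    by_cases hu'w : u' = w
    · subst hu'w
      exact ⟨u, mem_erase.2 ⟨huw, mem_filter.2 ⟨hu, hvu⟩⟩, hxu'.trans hj.symm⟩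
    · exact ⟨u', mem_erase.2 ⟨hu'w, hu'⟩, hxu'⟩
  omega

lemma numEdgesIn_add_numComponentsIn_add_card_le {A B : Finset V} (hBA : B ⊆ A) :
    G.numEdgesIn B + G.numComponentsIn B + #A ≤ G.numEdgesIn A + G.numComponentsIn A + #B := by
  induction A using Finset.strongInduction with | H A ih =>
  obtain rfl | hne := eq_or_ne B A
  · rfl
  obtain ⟨v, hvA, hvB⟩ := exists_of_ssubset (hBA.ssubset_of_ne hne)
  have := ih (A.erase v) (erase_ssubset hvA) (subset_erase.2 ⟨hBA, hvB⟩)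
  have := numEdgesIn_add_numComponentsIn_erase_add_one_le (G := G) hvA
  have := card_erase_add_one hvA
  omega

lemma card_le_numEdgesIn_add_numComponentsIn (A : Finset V) :
    #A ≤ G.numEdgesIn A + G.numComponentsIn A := by
  have := G.numEdgesIn_add_numComponentsIn_add_card_le (empty_subset A)
  rw [card_empty] at this
  omega

-- `ℕ`-subtraction does not truncate here, by `card_le_numEdgesIn_add_numComponentsIn`.
variable (G) in
noncomputable def cyclomaticNumberIn (A : Finset V) : ℕ :=
  G.numEdgesIn A + G.numComponentsIn A - #A

lemma cyclomaticNumberIn_mono {A B : Finset V} (hBA : B ⊆ A) :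
    G.cyclomaticNumberIn B ≤ G.cyclomaticNumberIn A := by
  have := G.numEdgesIn_add_numComponentsIn_add_card_le hBA
  have := G.card_le_numEdgesIn_add_numComponentsIn B
  unfold cyclomaticNumberIn
  omega

lemma cyclomaticNumberIn_erase_lt {A : Finset V} {u w : V} (hv : v ∈ A) (hu : u ∈ A) (hw : w ∈ A)
    (hvu : G.Adj v u) (hvw : G.Adj v w) (huw : u ≠ w) (hj : G.JoinedIn ↑(A.erase v) u w) :
    G.cyclomaticNumberIn (A.erase v) < G.cyclomaticNumberIn A := by
  have := numEdgesIn_add_numComponentsIn_erase_add_two_le hv hu hw hvu hvw huw hj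
  have := G.card_le_numEdgesIn_add_numComponentsIn (A.erase v)
  have := card_erase_add_one hv
  unfold cyclomaticNumberIn
  omega

theorem abs_eval_indepPolyOn_neg_one_le (A : Finset V) :
    |(G.indepPolyOn A).eval (-1)| ≤ 2 ^ G.cyclomaticNumberIn A := by
  induction A using Finset.strongInduction with | H A ih =>
  obtain rfl | hA := A.eq_empty_or_nonempty
  · simpa using one_le_pow₀ one_le_two
  obtain ⟨x, hx, hjoin⟩ := G.exists_forall_adj_joinedIn_erase hA
  set N := {u ∈ A | G.Adj x u}
  have hpow {m n : ℕ} (h : m ≤ n) : (2 : ℤ) ^ m ≤ 2 ^ n := pow_le_pow_right₀ one_le_two h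
  obtain hN | hN | hN := lt_trichotomy #N 1
  · have hN₀ : N = ∅ := card_eq_zero.1 (Nat.lt_one_iff.1 hN)
    rw [eval_indepPolyOn_neg_one_of_forall_not_adj hx fun w hw hxw =>
      eq_empty_iff_forall_notMem.1 hN₀ w (mem_filter.2 ⟨hw, hxw⟩)]
    simp
  · obtain ⟨u, hNu⟩ := card_eq_one.1 hN
    have hu : u ∈ N := hNu ▸ mem_singleton_self u
    have hleaf : ∀ w ∈ A, G.Adj x w → w = u := fun w hw hxw =>
      mem_singleton.1 (hNu ▸ mem_filter.2 ⟨hw, hxw⟩)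
    rw [eval_indepPolyOn_neg_one_of_forall_adj_eq hx (mem_filter.1 hu).1 (mem_filter.1 hu).2 hleaf,
      abs_neg]
    have hsub : {w ∈ A.erase u | ¬G.Adj u w} ⊆ A.erase u := filter_subset _ _
    exact (ih _ (hsub.trans_ssubset (erase_ssubset (mem_filter.1 hu).1))).trans
      (hpow (cyclomaticNumberIn_mono (hsub.trans (erase_subset u A))))
  · obtain ⟨u, hu, w, hw, huw⟩ := one_lt_card.1 hN
    rw [mem_filter] at hu hw
    have hlt := cyclomaticNumberIn_erase_lt hx hu.1 hw.1 hu.2 hw.2 huw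
      (hjoin u hu.1 w hw.1 hu.2 hw.2)
    have hsub : {w ∈ A.erase x | ¬G.Adj x w} ⊆ A.erase x := filter_subset _ _
    have h₁ := ih _ (erase_ssubset hx)
    have h₂ := (ih _ (hsub.trans_ssubset (erase_ssubset hx))).trans
      (hpow (cyclomaticNumberIn_mono hsub))
    rw [indepPolyOn_eq_add hx]
    calc _ = |(G.indepPolyOn (A.erase x)).eval (-1) -
            (G.indepPolyOn {w ∈ A.erase x | ¬G.Adj x w}).eval (-1)| := by simp [sub_eq_add_neg]
      _ ≤ 2 ^ G.cyclomaticNumberIn (A.erase x) + 2 ^ G.cyclomaticNumberIn (A.erase x) :=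
        (abs_sub _ _).trans (add_le_add h₁ h₂)
      _ = 2 ^ (G.cyclomaticNumberIn (A.erase x) + 1) := by ring
      _ ≤ 2 ^ G.cyclomaticNumberIn A := hpow hlt

lemma numEdgesIn_univ : G.numEdgesIn univ = #G.edgeFinset := by
  rw [numEdgesIn, ← card_filter_edgeFinset_toFinset_subset,
    filter_true_of_mem fun _ _ => subset_univ _]

lemma numComponentsIn_univ : G.numComponentsIn univ = Fintype.card G.ConnectedComponent := by
  rw [numComponentsIn, coe_univ, ← Nat.card_eq_fintype_card]
  exact Nat.card_congr (induceUnivIso G).connectedComponentEquiv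

lemma indepPoly_eq_indepPolyOn_univ : indepPoly G = G.indepPolyOn univ := by
  rw [indepPoly, indepPolyOn, powerset_univ]
  exact sum_congr (filter_congr fun _ _ => Iff.rfl) fun _ _ => rfl

end SimpleGraph

open Classical in
/-- `|I(G;−1)| ≤ 2^{ν(G)}`, where `ν(G) = |E(G)| − |V(G)| + p` is the cyclomatic
number of `G` and `p` is the number of connected components. -/
theorem abs_indepPoly_neg_one_le_two_pow_cyclomaticNumber
    {V : Type*} [Fintype V] (G : SimpleGraph V) (ν : ℕ)
    (hν : (ν : ℤ) = G.edgeFinset.card - Fintype.card V + Fintype.card G.ConnectedComponent) :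
    |(indepPoly G).eval (-1)| ≤ 2 ^ ν := by
  have hcard := G.card_le_numEdgesIn_add_numComponentsIn univ
  rw [card_univ, G.numEdgesIn_univ, G.numComponentsIn_univ] at hcard
  have hν' : G.cyclomaticNumberIn univ = ν := by
    rw [SimpleGraph.cyclomaticNumberIn, G.numEdgesIn_univ, G.numComponentsIn_univ, card_univ]
    omega
  rw [G.indepPoly_eq_indepPolyOn_univ, ← hν']
  exact G.abs_eval_indepPolyOn_neg_one_le univ
end

section
/- Let q be a positive integer and let G = qK₃ be the disjoint union of q triangles. Then I(G;x) = (1+3x)^q, the decycling number satisfies φ(G) = q, and I(G;−1) = (−2)^{φ(G)}; hence the bound |I(G;−1)| ≤ 2^{φ(G)} is attained with equality. -/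
/-- `qK₃`: the disjoint union of `q` triangles, realized on the vertex set `Fin q × Fin 3`,
where two vertices are adjacent iff they lie in the same copy and are distinct. -/
def qK3 (q : ℕ) : SimpleGraph (Fin q × Fin 3) where
  Adj a b := a.1 = b.1 ∧ a.2 ≠ b.2
  symm := by constructor; intro a b ⟨h1, h2⟩; exact ⟨h1.symm, h2.symm⟩
  loopless := by constructor; intro a ⟨h1, h2⟩; exact h2 rfl

/-!
An independent set of `qK₃` meets each triangle in at most one vertex, so it is the graph of a
partial function `Fin q → Fin 3`; counting these by size gives `(1 + 3x)^q`. Deleting one vertex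
from every triangle leaves a perfect matching, which is acyclic, while a set of fewer than `q`
vertices misses some triangle entirely, so `φ(qK₃) = q`.
-/

open Finset Polynomial SimpleGraph

section PartialGraph

variable {α β : Type*} [Fintype α] [Fintype β] [DecidableEq β]

def partialGraph (f : α → Option β) : Finset (α × β) :=
  univ.filter fun p => p.2 ∈ f p.1

@[simp]
theorem mem_partialGraph {f : α → Option β} {p : α × β} :
    p ∈ partialGraph f ↔ p.2 ∈ f p.1 := by
  simp [partialGraph]

theorem card_partialGraph (f : α → Option β) : #(partialGraph f) = ∑ a, #(f a).toFinset := by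
  simp only [partialGraph, card_filter, Fintype.sum_prod_type]
  refine sum_congr rfl fun a _ => ?_
  rw [← card_filter]
  congr 1
  ext b
  simp

theorem injOn_fst_partialGraph (f : α → Option β) :
    Set.InjOn Prod.fst (partialGraph f : Set (α × β)) := by
  rintro ⟨a, b⟩ hb ⟨a', b'⟩ hb' (rfl : a = a')
  simp only [mem_coe, mem_partialGraph] at hb hb'
  rw [Option.mem_unique hb hb']

theorem partialGraph_injective : Function.Injective (partialGraph : (α → Option β) → _) := by
  intro f g h
  funext a
  refine Option.ext fun b => ?_
  simpa using congrArg ((a, b) ∈ ·) h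

theorem exists_partialGraph_eq {s : Finset (α × β)}
    (hs : Set.InjOn Prod.fst (s : Set (α × β))) : ∃ f : α → Option β, partialGraph f = s := by
  have (a : α) : ∃ o : Option β, ∀ b, b ∈ o ↔ (a, b) ∈ s := by
    by_cases h : ∃ b, (a, b) ∈ s
    · obtain ⟨b, hb⟩ := h
      refine ⟨some b, fun b' => ?_⟩
      rw [Option.mem_some_iff]
      exact ⟨by rintro rfl; exact hb, fun hb' => congrArg Prod.snd (hs hb hb' rfl)⟩
    · push Not at h
      exact ⟨none, by simpa using h⟩
  choose f hf using this
  exact ⟨f, by ext ⟨a, b⟩; simp [hf]⟩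

end PartialGraph

theorem sum_pow_card_filter_injOn_fst {α β R : Type*} [Fintype α] [Fintype β] [CommSemiring R]
    [DecidablePred fun s : Finset (α × β) => Set.InjOn Prod.fst (s : Set (α × β))] (x : R) :
    ∑ s ∈ univ.filter (fun s : Finset (α × β) => Set.InjOn Prod.fst (s : Set (α × β))), x ^ #s =
      (1 + Fintype.card β * x) ^ Fintype.card α := by
  classical
  have hfactor : ∑ o : Option β, x ^ #o.toFinset = 1 + Fintype.card β * x := by
    simp [Fintype.sum_option]
  calc _ = ∑ f : α → Option β, x ^ #(partialGraph f) := by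
        refine (sum_nbij partialGraph (fun f _ => ?_) partialGraph_injective.injOn
          (fun s hs => ?_) (fun _ _ => rfl)).symm
        · simpa using injOn_fst_partialGraph f
        · obtain ⟨f, rfl⟩ := exists_partialGraph_eq (by simpa using hs)
          exact ⟨f, mem_coe.2 (mem_univ f), rfl⟩
    _ = ∏ a : α, ∑ o : Option β, x ^ #o.toFinset := by
        simp_rw [card_partialGraph, ← prod_pow_eq_pow_sum, Fintype.prod_sum]
    _ = _ := by simp [hfactor]

theorem qK3_isIndep_iff {q : ℕ} {s : Finset (Fin q × Fin 3)} :
    (∀ v ∈ s, ∀ w ∈ s, v ≠ w → ¬ (qK3 q).Adj v w) ↔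
      Set.InjOn Prod.fst (s : Set (Fin q × Fin 3)) := by
  simp only [Set.InjOn, mem_coe, qK3, Prod.ext_iff]
  grind

theorem indepPoly_qK3 (q : ℕ) : indepPoly (qK3 q) = (1 + 3 * X) ^ q := by
  simp only [indepPoly, qK3_isIndep_iff]
  rw [sum_pow_card_filter_injOn_fst]
  simp

namespace SimpleGraph

variable {V : Type*} {G : SimpleGraph V}

-- A cycle leaves its base vertex towards two distinct neighbours.
theorem isAcyclic_of_forall_neighborSet_subsingleton
    (h : ∀ v, (G.neighborSet v).Subsingleton) : G.IsAcyclic := fun v c hc =>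
  hc.snd_ne_penultimate <| h v (c.adj_snd hc.not_nil) (c.adj_penultimate hc.not_nil).symm

theorem not_isAcyclic_induce_of_isNClique {S : Set V} {t : Finset V} {n : ℕ} (hn : 3 ≤ n)
    (ht : G.IsNClique n t) (htS : ↑t ⊆ S) : ¬ (G.induce S).IsAcyclic := by
  classical
  intro hS
  refine hS.cliqueFree hn (t.subtype (· ∈ S)) ?_
  rwa [isNClique_induce_iff, subtype_map_of_mem fun v hv => htS hv]

end SimpleGraph

theorem decyclingNumber_eq_of_forall_le {V : Type*} [Fintype V] {G : SimpleGraph V} {n : ℕ}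
    {s : Finset V} (hs : #s = n) (hacyc : (G.induce {v | v ∉ s}).IsAcyclic)
    (hmin : ∀ t : Finset V, (G.induce {v | v ∉ t}).IsAcyclic → n ≤ #t) :
    decyclingNumber G = n :=
  le_antisymm (Nat.sInf_le ⟨s, hs, hacyc⟩)
    (le_csInf ⟨n, s, hs, hacyc⟩ fun _ ⟨t, ht, h⟩ => ht ▸ hmin t h)

theorem qK3_isNClique_copy {q : ℕ} (i : Fin q) : (qK3 q).IsNClique 3 ({i} ×ˢ univ) := by
  refine ⟨fun v hv w hw hvw => ?_, by simp⟩
  simp only [coe_product, coe_singleton, coe_univ, Set.mem_prod, Set.mem_singleton_iff] at hv hw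
  exact ⟨hv.1.trans hw.1.symm, fun h => hvw (Prod.ext (hv.1.trans hw.1.symm) h)⟩

theorem qK3_isAcyclic_induce_compl_zero (q : ℕ) :
    ((qK3 q).induce {v | v ∉ (univ ×ˢ {0} : Finset (Fin q × Fin 3))}).IsAcyclic := by
  refine isAcyclic_of_forall_neighborSet_subsingleton
    fun ⟨⟨i, a⟩, ha⟩ ⟨⟨j, b⟩, hb⟩ hab ⟨⟨k, c⟩, hc⟩ hac => ?_
  simp only [Set.mem_ofPred_eq, mem_product, mem_univ, mem_singleton, true_and] at ha hb hc
  obtain ⟨rfl, hab⟩ : i = j ∧ a ≠ b := hab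
  obtain ⟨rfl, hac⟩ : i = k ∧ a ≠ c := hac
  obtain rfl : b = c := by omega
  rfl

theorem decyclingNumber_qK3 (q : ℕ) : decyclingNumber (qK3 q) = q := by
  refine decyclingNumber_eq_of_forall_le (by simp) (qK3_isAcyclic_induce_compl_zero q)
    fun t ht => ?_
  by_contra! hlt
  obtain ⟨i, -, hi⟩ := exists_mem_notMem_of_card_lt_card (t := univ)
    (card_image_le.trans_lt (by simpa using hlt) : #(t.image Prod.fst) < _)
  refine not_isAcyclic_induce_of_isNClique (S := {v | v ∉ t}) le_rfl (qK3_isNClique_copy i)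
    (fun v hv hvt => ?_) ht
  rw [mem_coe, mem_product, mem_singleton] at hv
  exact hi (hv.1 ▸ mem_image_of_mem Prod.fst hvt)

open Polynomial in
theorem qK3_indepPoly_decyclingNumber_general (q : ℕ) :
    indepPoly (qK3 q) = (1 + 3 * X) ^ q ∧
      decyclingNumber (qK3 q) = q ∧
      (indepPoly (qK3 q)).eval (-1) = (-2) ^ decyclingNumber (qK3 q) ∧
      |(indepPoly (qK3 q)).eval (-1)| = 2 ^ decyclingNumber (qK3 q) := by
  have hI := indepPoly_qK3 q
  have hφ := decyclingNumber_qK3 q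
  refine ⟨hI, hφ, ?_, ?_⟩ <;> norm_num [hI, hφ, abs_pow]

open Polynomial in
/-- For `G = qK₃` (disjoint union of `q ≥ 1` triangles): `I(G;x) = (1+3x)^q`, `φ(G) = q`,
and `I(G;−1) = (−2)^{φ(G)}`; hence `|I(G;−1)| = 2^{φ(G)}`, so the bound
`|I(G;−1)| ≤ 2^{φ(G)}` is attained with equality. -/
theorem qK3_indepPoly_decyclingNumber (q : ℕ) (hq : 1 ≤ q) :
    indepPoly (qK3 q) = (1 + 3 * X) ^ q ∧
      decyclingNumber (qK3 q) = q ∧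
      (indepPoly (qK3 q)).eval (-1) = (-2) ^ decyclingNumber (qK3 q) ∧
      |(indepPoly (qK3 q)).eval (-1)| = 2 ^ decyclingNumber (qK3 q) :=
  qK3_indepPoly_decyclingNumber_general q
end
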